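/- Let a, b > 0 and define Q_{a,b}^{[2]}(x) := (1−x)^{b−1} + ((b−1)x/(a+1)) (1 − (a+1)x/(a+2))^{b−2} for x ∈ (0,1). Then for all x ∈ (0,1): if b ∈ (0,1] ∪ [2,3] then Q_{a,b}(x) ≤ Q_{a,b}^{[2]}(x), and if b ∈ [1,2] ∪ [3,∞) then Q_{a,b}(x) ≥ Q_{a,b}^{[2]}(x). -/

import Mathlib

/-!
Integrating by parts, `Q_{a,b}(x) = (1-x)^{b-1} + (b-1) x ∫₀¹ y^a (1-xy)^{b-2} dy`. Under the
probability density `(a+1) y^a` on `[0,1]` the mean of `1 - xy` is `v = 1 - (a+1)x/(a+2)`, so the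
tangent line of `t ↦ t^{b-2}` at `v`, being affine, integrates against `y^a` to exactly
`v^{b-2}/(a+1)`. As `t ↦ t^{b-2}` lies above this tangent line for `b ≤ 2` or `b ≥ 3` (convexity)
and below it for `2 ≤ b ≤ 3` (concavity), the integral is bounded by `v^{b-2}/(a+1)` from the
corresponding side; multiplying by `(b-1)x`, whose sign changes at `b = 1`, gives the two bounds.
-/

open MeasureTheory

/-- The auxiliary function `Q_{a,b}(x) = a ∫₀¹ y^(a-1) (1-xy)^(b-1) dy`. -/
noncomputable def Q (a b x : ℝ) : ℝ :=
  a * ∫ y in (0:ℝ)..1, y ^ (a - 1) * (1 - x * y) ^ (b - 1)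

open Set

namespace Real

lemma one_add_mul_sub_one_le_rpow_of_nonpos {p t : ℝ} (hp : p ≤ 0) (ht : 0 < t) :
    1 + p * (t - 1) ≤ t ^ p := by
  have hlog : p * (t - 1) ≤ p * log t :=
    mul_le_mul_of_nonpos_left (log_le_sub_one_of_pos ht) hp
  calc 1 + p * (t - 1) ≤ p * log t + 1 := by linarith
    _ ≤ exp (p * log t) := add_one_le_exp _
    _ = t ^ p := by rw [rpow_def_of_pos ht, mul_comm]

noncomputable def rpowTangent (p v u : ℝ) : ℝ :=
  v ^ p + p * v ^ (p - 1) * (u - v)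

lemma rpowTangent_eq_mul {p v : ℝ} (hv : 0 < v) (u : ℝ) :
    rpowTangent p v u = v ^ p * (1 + p * (u / v - 1)) := by
  rw [rpowTangent, rpow_sub_one hv.ne']
  field_simp

lemma rpow_eq_mul_div_rpow {p u v : ℝ} (hu : 0 < u) (hv : 0 < v) :
    u ^ p = v ^ p * (u / v) ^ p := by
  rw [div_rpow hu.le hv.le, mul_div_cancel₀ _ (rpow_pos_of_pos hv p).ne']

lemma rpowTangent_le_rpow {p u v : ℝ} (hu : 0 < u) (hv : 0 < v) (hp : p ≤ 0 ∨ 1 ≤ p) :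
    rpowTangent p v u ≤ u ^ p := by
  rw [rpowTangent_eq_mul hv, rpow_eq_mul_div_rpow hu hv]
  gcongr
  have huv : 0 < u / v := div_pos hu hv
  rcases hp with hp | hp
  · exact one_add_mul_sub_one_le_rpow_of_nonpos hp huv
  · simpa using one_add_mul_self_le_rpow_one_add (s := u / v - 1) (by linarith) hp

lemma rpow_le_rpowTangent {p u v : ℝ} (hu : 0 < u) (hv : 0 < v) (hp₀ : 0 ≤ p) (hp₁ : p ≤ 1) :
    u ^ p ≤ rpowTangent p v u := by
  rw [rpowTangent_eq_mul hv, rpow_eq_mul_div_rpow hu hv]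
  gcongr
  have huv : 0 < u / v := div_pos hu hv
  simpa using rpow_one_add_le_one_add_mul_self (s := u / v - 1) (by linarith) hp₀ hp₁

end Real

open Real

lemma integral_rpow_mul_affine {a : ℝ} (ha : -1 < a) (C D : ℝ) :
    ∫ y in (0:ℝ)..1, y ^ a * (C + D * y) = C / (a + 1) + D / (a + 2) := by
  have hsplit : ∫ y in (0:ℝ)..1, y ^ a * (C + D * y)
      = ∫ y in (0:ℝ)..1, (C * y ^ a + D * y ^ (a + 1)) := by
    refine intervalIntegral.integral_congr fun y hy => ?_
    rw [uIcc_of_le zero_le_one] at hy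
    simp only [rpow_add_one' hy.1 (by linarith : a + 1 ≠ 0)]
    ring
  have hint : ∀ r : ℝ, -1 < r → ∫ y in (0:ℝ)..1, y ^ r = 1 / (r + 1) := fun r hr => by
    rw [integral_rpow (Or.inl hr), one_rpow, zero_rpow (by linarith)]
    ring
  rw [hsplit, intervalIntegral.integral_add, intervalIntegral.integral_const_mul,
    intervalIntegral.integral_const_mul, hint a ha, hint (a + 1) (by linarith)]
  · ring
  · exact (intervalIntegral.intervalIntegrable_rpow' ha).const_mul C
  · exact (intervalIntegral.intervalIntegrable_rpow' (by linarith)).const_mul D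

lemma one_sub_mul_pos {x y : ℝ} (hx : x < 1) (hy : y ∈ Icc (0:ℝ) 1) : 0 < 1 - x * y := by
  rcases le_or_gt 0 x with hx0 | hx0 <;> nlinarith [hy.1, hy.2]

lemma continuousOn_one_sub_mul_rpow {x : ℝ} (hx : x < 1) (p : ℝ) :
    ContinuousOn (fun y : ℝ => (1 - x * y) ^ p) (uIcc 0 1) := by
  rw [uIcc_of_le zero_le_one]
  exact (continuousOn_const.sub (continuousOn_const.mul continuousOn_id)).rpow_const
    fun y hy => Or.inl (one_sub_mul_pos hx hy).ne'

lemma Q_eq_add_integral {a b x : ℝ} (ha : 0 < a) (hx : x < 1) :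
    Q a b x = (1 - x) ^ (b - 1)
      + (b - 1) * x * ∫ y in (0:ℝ)..1, y ^ a * (1 - x * y) ^ (b - 2) := by
  have hparts := intervalIntegral.integral_mul_deriv_eq_deriv_mul_of_hasDerivAt
    (u := fun y : ℝ => y ^ a) (u' := fun y => a * y ^ (a - 1))
    (v := fun y => (1 - x * y) ^ (b - 1)) (v' := fun y => -((b - 1) * x) * (1 - x * y) ^ (b - 2))
    (a := 0) (b := 1)
    (continuousOn_id.rpow_const fun _ _ => Or.inr ha.le) (continuousOn_one_sub_mul_rpow hx _)
    (fun y hy => by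
      rw [min_eq_left zero_le_one] at hy
      exact hasDerivAt_rpow_const (Or.inl hy.1.ne'))
    (fun y hy => by
      rw [min_eq_left zero_le_one, max_eq_right zero_le_one] at hy
      have hpos := one_sub_mul_pos hx (Ioo_subset_Icc_self hy)
      have hd := (((hasDerivAt_id y).const_mul x).const_sub 1).rpow_const (p := b - 1)
        (Or.inl hpos.ne')
      rw [show b - 1 - 1 = b - 2 by ring] at hd
      exact hd.congr_deriv (by simp only [mul_one, id]; ring))
    ((intervalIntegral.intervalIntegrable_rpow' (by linarith)).const_mul a)
    ((continuousOn_one_sub_mul_rpow hx _).intervalIntegrable.const_mul _)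
  have hQ : Q a b x = ∫ y in (0:ℝ)..1, a * y ^ (a - 1) * (1 - x * y) ^ (b - 1) := by
    simp_rw [Q, ← intervalIntegral.integral_const_mul, mul_assoc]
  have hI : ∫ y in (0:ℝ)..1, y ^ a * (-((b - 1) * x) * (1 - x * y) ^ (b - 2))
      = -((b - 1) * x) * ∫ y in (0:ℝ)..1, y ^ a * (1 - x * y) ^ (b - 2) := by
    simp_rw [← intervalIntegral.integral_const_mul, mul_left_comm]
  simp only [one_rpow, zero_rpow ha.ne', mul_one, zero_mul, sub_zero, hI] at hparts
  rw [hQ]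
  linarith

section Jensen

variable {a x : ℝ}

lemma one_sub_mean_pos (ha : -1 < a) (hx : x < 1) : 0 < 1 - (a + 1) * x / (a + 2) := by
  have hm : (a + 1) / (a + 2) ∈ Icc (0:ℝ) 1 :=
    ⟨div_nonneg (by linarith) (by linarith), (div_le_one (by linarith)).2 (by linarith)⟩
  simpa only [mul_div_assoc, mul_comm] using one_sub_mul_pos hx hm

/-- `1 - (a+1)x/(a+2)` is the mean of `1 - xy` for the density `(a+1) y^a` on `[0,1]`, and an
affine function integrates to its value at the mean. -/
lemma integral_rpow_mul_rpowTangent (ha : -1 < a) (p : ℝ) :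
    ∫ y in (0:ℝ)..1, y ^ a * rpowTangent p (1 - (a + 1) * x / (a + 2)) (1 - x * y)
      = (1 - (a + 1) * x / (a + 2)) ^ p / (a + 1) := by
  set v := 1 - (a + 1) * x / (a + 2) with hv
  have hmean : (1 - v) / (a + 1) = x / (a + 2) := by
    have : a + 1 ≠ 0 := by linarith
    rw [hv]
    field_simp
    ring
  have haffine : ∀ y, rpowTangent p v (1 - x * y)
      = (v ^ p + p * v ^ (p - 1) * (1 - v)) + (-(p * v ^ (p - 1) * x)) * y := fun y => by
    rw [rpowTangent]
    ring
  simp_rw [haffine]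
  rw [integral_rpow_mul_affine ha]
  calc _ = v ^ p / (a + 1) + p * v ^ (p - 1) * ((1 - v) / (a + 1) - x / (a + 2)) := by ring
    _ = v ^ p / (a + 1) := by rw [hmean, sub_self, mul_zero, add_zero]

lemma intervalIntegrable_rpow_mul_rpowTangent (ha : -1 < a) (p v : ℝ) :
    IntervalIntegrable (fun y : ℝ => y ^ a * rpowTangent p v (1 - x * y)) volume 0 1 :=
  (intervalIntegral.intervalIntegrable_rpow' ha).mul_continuousOn
    (by unfold rpowTangent; fun_prop)

lemma intervalIntegrable_rpow_mul_one_sub_mul_rpow (ha : -1 < a) (hx : x < 1) (p : ℝ) :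
    IntervalIntegrable (fun y : ℝ => y ^ a * (1 - x * y) ^ p) volume 0 1 :=
  (intervalIntegral.intervalIntegrable_rpow' ha).mul_continuousOn
    (continuousOn_one_sub_mul_rpow hx p)

lemma rpow_one_sub_mean_div_le_integral (ha : -1 < a) (hx : x < 1) {p : ℝ}
    (hp : p ≤ 0 ∨ 1 ≤ p) :
    (1 - (a + 1) * x / (a + 2)) ^ p / (a + 1)
      ≤ ∫ y in (0:ℝ)..1, y ^ a * (1 - x * y) ^ p := by
  rw [← integral_rpow_mul_rpowTangent ha]
  refine intervalIntegral.integral_mono_on zero_le_one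
    (intervalIntegrable_rpow_mul_rpowTangent ha _ _)
    (intervalIntegrable_rpow_mul_one_sub_mul_rpow ha hx p) fun y hy => ?_
  exact mul_le_mul_of_nonneg_left
    (rpowTangent_le_rpow (one_sub_mul_pos hx hy) (one_sub_mean_pos ha hx) hp)
    (rpow_nonneg hy.1 a)

lemma integral_le_rpow_one_sub_mean_div (ha : -1 < a) (hx : x < 1) {p : ℝ}
    (hp₀ : 0 ≤ p) (hp₁ : p ≤ 1) :
    ∫ y in (0:ℝ)..1, y ^ a * (1 - x * y) ^ p
      ≤ (1 - (a + 1) * x / (a + 2)) ^ p / (a + 1) := by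
  rw [← integral_rpow_mul_rpowTangent ha]
  refine intervalIntegral.integral_mono_on zero_le_one
    (intervalIntegrable_rpow_mul_one_sub_mul_rpow ha hx p)
    (intervalIntegrable_rpow_mul_rpowTangent ha _ _) fun y hy => ?_
  exact mul_le_mul_of_nonneg_left
    (rpow_le_rpowTangent (one_sub_mul_pos hx hy) (one_sub_mean_pos ha hx) hp₀ hp₁)
    (rpow_nonneg hy.1 a)

end Jensen

theorem beta_Q2_bounds_general (a b : ℝ) (ha : 0 < a)
    (x : ℝ) (hx : x ∈ Set.Ioo (0:ℝ) 1) :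
    ((b ≤ 1 ∨ (2 ≤ b ∧ b ≤ 3)) →
      Q a b x ≤ (1 - x) ^ (b - 1)
        + (b - 1) * x / (a + 1) * (1 - (a + 1) * x / (a + 2)) ^ (b - 2)) ∧
    (((1 ≤ b ∧ b ≤ 2) ∨ 3 ≤ b) →
      (1 - x) ^ (b - 1)
        + (b - 1) * x / (a + 1) * (1 - (a + 1) * x / (a + 2)) ^ (b - 2) ≤ Q a b x) := by
  obtain ⟨hx₀, hx₁⟩ := hx
  have ha' : -1 < a := by linarith
  have hterm : (b - 1) * x / (a + 1) * (1 - (a + 1) * x / (a + 2)) ^ (b - 2)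
      = (b - 1) * x * ((1 - (a + 1) * x / (a + 2)) ^ (b - 2) / (a + 1)) := by ring
  rw [Q_eq_add_integral ha hx₁, hterm]
  have hconvex (hp : b - 2 ≤ 0 ∨ 1 ≤ b - 2) := rpow_one_sub_mean_div_le_integral ha' hx₁ hp
  have hcoeff (hb : 1 ≤ b) : 0 ≤ (b - 1) * x := mul_nonneg (by linarith) hx₀.le
  refine ⟨?_, ?_⟩
  · rintro (hb₁ | ⟨hb₂, hb₃⟩)
    · refine add_le_add_right (mul_le_mul_of_nonpos_left (hconvex (Or.inl (by linarith))) ?_) _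
      exact mul_nonpos_of_nonpos_of_nonneg (by linarith) hx₀.le
    · refine add_le_add_right (mul_le_mul_of_nonneg_left ?_ (hcoeff (by linarith))) _
      exact integral_le_rpow_one_sub_mean_div ha' hx₁ (by linarith) (by linarith)
  · rintro (⟨hb₁, hb₂⟩ | hb₃)
    · exact add_le_add_right
        (mul_le_mul_of_nonneg_left (hconvex (Or.inl (by linarith))) (hcoeff hb₁)) _
    · exact add_le_add_right
        (mul_le_mul_of_nonneg_left (hconvex (Or.inr (by linarith))) (hcoeff (by linarith))) _

theorem beta_Q2_bounds (a b : ℝ) (ha : 0 < a) (hb : 0 < b)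
    (x : ℝ) (hx : x ∈ Set.Ioo (0:ℝ) 1) :
    ((b ≤ 1 ∨ (2 ≤ b ∧ b ≤ 3)) →
      Q a b x ≤ (1 - x) ^ (b - 1)
        + (b - 1) * x / (a + 1) * (1 - (a + 1) * x / (a + 2)) ^ (b - 2)) ∧
    (((1 ≤ b ∧ b ≤ 2) ∨ 3 ≤ b) →
      (1 - x) ^ (b - 1)
        + (b - 1) * x / (a + 1) * (1 - (a + 1) * x / (a + 2)) ^ (b - 2) ≤ Q a b x) :=
  beta_Q2_bounds_general a b ha x hx
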